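/- arXiv:2007.16016 — 2 statements merged into one kernel-verified Lean document; each statement's English description precedes it below -/
import Mathlib

section
/- In F_2[x], for positive integers a, b, c, the identity (x+1)^a (x^2+x+1)^b = 1 + x^c holds if and only if a = b = 2^r and c = 3b for some natural number r. -/
open Polynomial

lemma two_eq_zero_poly : (2 : Polynomial (ZMod 2)) = 0 := by
  rw [← map_ofNat (C : ZMod 2 →+* _) 2, show (2 : ZMod 2) = 0 from rfl, map_zero]

lemma irr2 : Irreducible (X ^ 2 + X + 1 : Polynomial (ZMod 2)) := by
  have hd : (X ^ 2 + X + 1 : Polynomial (ZMod 2)).natDegree = 2 := by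
    compute_degree!
  rw [Polynomial.irreducible_iff_roots_eq_zero_of_degree_le_three (by rw [hd])
    (by rw [hd]; norm_num)]
  rw [Multiset.eq_zero_iff_forall_notMem]
  intro x hx
  have h := isRoot_of_mem_roots hx
  simp only [IsRoot, eval_add, eval_pow, eval_X, eval_one] at h
  exact (by decide : ∀ y : ZMod 2, ¬(y ^ 2 + y + 1 = 0)) x h

lemma one_add_X_pow_ne_zero {R : Type*} [CommRing R] [Nontrivial R] {d : ℕ} (hd : 0 < d) :
    (1 + X ^ d : R[X]) ≠ 0 := fun h => by
  simpa [zero_pow hd.ne'] using congrArg (eval 0) h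

lemma fwd : ∀ c a b : ℕ, 0 < a → 0 < b → 0 < c →
    ((X + 1) ^ a * (X ^ 2 + X + 1) ^ b : Polynomial (ZMod 2)) = 1 + X ^ c →
    ∃ r : ℕ, a = 2 ^ r ∧ b = 2 ^ r ∧ c = 3 * b := by
  intro c
  induction c using Nat.strong_induction_on with
  | _ c IH =>
  intro a b ha hb hc heq
  have h2 := two_eq_zero_poly
  rcases Nat.even_or_odd c with hce | hco
  · -- even case
    obtain ⟨d, hd⟩ := hce
    have hd0 : 0 < d := by omega
    have hsq : (1 + X ^ c : Polynomial (ZMod 2)) = (1 + X ^ d) ^ 2 := by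
      rw [hd]
      linear_combination (-(X ^ d) : Polynomial (ZMod 2)) * h2
    rw [hsq] at heq
    have hRne : (1 + X ^ d : Polynomial (ZMod 2)) ≠ 0 := one_add_X_pow_ne_zero hd0
    have hLne : ((X + 1) ^ a * (X ^ 2 + X + 1) ^ b : Polynomial (ZMod 2)) ≠ 0 := by
      rw [heq]; exact pow_ne_zero 2 hRne
    -- a is even
    have hneg : (-1 : Polynomial (ZMod 2)) = 1 := by linear_combination -h2
    have hXsub : (X - C 1 : Polynomial (ZMod 2)) = X + 1 := by
      rw [C_1, sub_eq_add_neg, hneg]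
    have hma : rootMultiplicity 1 ((X + 1) ^ a * (X ^ 2 + X + 1) ^ b : Polynomial (ZMod 2))
        = a := by
      rw [rootMultiplicity_mul hLne, ← hXsub, rootMultiplicity_X_sub_C_pow,
        rootMultiplicity_eq_zero, add_zero]
      simp only [IsRoot, eval_pow, eval_add, eval_X, eval_one, one_pow]
      rw [show (1 : ZMod 2) + 1 + 1 = 1 from by decide, one_pow]
      exact one_ne_zero
    have hma2 : rootMultiplicity 1 ((1 + X ^ d) ^ 2 : Polynomial (ZMod 2))
        = 2 * rootMultiplicity 1 (1 + X ^ d : Polynomial (ZMod 2)) := by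
      rw [sq, rootMultiplicity_mul (mul_ne_zero hRne hRne)]; ring
    have haeven : ∃ a₁, a = 2 * a₁ := ⟨_, by rw [← hma, heq, hma2]⟩
    -- b is even, via the splitting field of X^2+X+1
    haveI : Fact (Irreducible (X ^ 2 + X + 1 : Polynomial (ZMod 2))) := ⟨irr2⟩
    set K := AdjoinRoot (X ^ 2 + X + 1 : Polynomial (ZMod 2)) with hK
    set ω : K := AdjoinRoot.root (X ^ 2 + X + 1 : Polynomial (ZMod 2)) with hω'
    have hω : ω ^ 2 + ω + 1 = 0 := by
      have := AdjoinRoot.eval₂_root (X ^ 2 + X + 1 : Polynomial (ZMod 2))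
      simpa using this
    have h2K : (2 : K) = 0 := by
      rw [← map_ofNat (AdjoinRoot.of (X ^ 2 + X + 1 : Polynomial (ZMod 2))) 2, show (2 : ZMod 2) = 0 from rfl, map_zero]
    have h2P : (2 : K[X]) = 0 := by
      rw [← map_ofNat (C : K →+* K[X]) 2, h2K, map_zero]
    have heqK := congrArg (Polynomial.map (AdjoinRoot.of (X ^ 2 + X + 1 : Polynomial (ZMod 2)))) heq
    simp only [Polynomial.map_mul, Polynomial.map_pow, Polynomial.map_add, Polynomial.map_one,
      Polynomial.map_X] at heqK
    have hω'' : (C ω) ^ 2 + C ω + 1 = (0 : K[X]) := by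
      calc (C ω) ^ 2 + C ω + 1 = C (ω ^ 2 + ω + 1) := by rw [C_add, C_add, C_pow, C_1]
      _ = 0 := by rw [hω, C_0]
    have hfac : (X ^ 2 + X + 1 : K[X]) = (X - C ω) * (X - C (ω + 1)) := by
      rw [C_add, C_1]
      linear_combination -hω'' + (X + X * C ω + 1) * h2P
    have hωne1 : ω + 1 ≠ 0 := fun h => one_ne_zero (α := K) (by linear_combination hω - ω * h)
    have hRKne : (1 + X ^ d : K[X]) ≠ 0 := one_add_X_pow_ne_zero hd0
    have hLKne : ((X + 1) ^ a * (X ^ 2 + X + 1) ^ b : K[X]) ≠ 0 := by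
      rw [heqK]; exact pow_ne_zero 2 hRKne
    have hmb : rootMultiplicity ω ((X + 1) ^ a * (X ^ 2 + X + 1) ^ b : K[X]) = b := by
      rw [rootMultiplicity_mul hLKne]
      rw [rootMultiplicity_eq_zero (p := (X + 1) ^ a) (by
        simp only [IsRoot, eval_pow, eval_add, eval_X, eval_one]
        exact pow_ne_zero _ hωne1)]
      rw [hfac, mul_pow, rootMultiplicity_mul (by
        rw [← mul_pow, ← hfac]
        exact right_ne_zero_of_mul hLKne)]
      rw [rootMultiplicity_X_sub_C_pow]
      rw [rootMultiplicity_eq_zero (p := (X - C (ω + 1)) ^ b) (by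
        simp only [IsRoot, eval_pow, eval_sub, eval_X, eval_C]
        intro hcon
        apply one_ne_zero (α := K)
        have := pow_eq_zero_iff (n := b) hb.ne' |>.mp hcon
        linear_combination -this)]
      omega
    have hmb2 : rootMultiplicity ω ((1 + X ^ d) ^ 2 : K[X])
        = 2 * rootMultiplicity ω (1 + X ^ d : K[X]) := by
      rw [sq (1 + X ^ d : K[X]), rootMultiplicity_mul (mul_ne_zero hRKne hRKne)]; ring
    have hbeven : ∃ b₁, b = 2 * b₁ := ⟨_, by rw [← hmb, heqK, hmb2]⟩
    obtain ⟨a₁, ha₁⟩ := haeven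
    obtain ⟨b₁, hb₁⟩ := hbeven
    -- take square roots
    have hpows : (((X + 1) ^ a₁ * (X ^ 2 + X + 1) ^ b₁ : Polynomial (ZMod 2))) ^ 2
        = (1 + X ^ d) ^ 2 := by
      rw [← heq, ha₁, hb₁, mul_pow, ← pow_mul, ← pow_mul, mul_comm a₁ 2, mul_comm b₁ 2]
    set p : Polynomial (ZMod 2) := (X + 1) ^ a₁ * (X ^ 2 + X + 1) ^ b₁ with hp
    set q : Polynomial (ZMod 2) := 1 + X ^ d with hq
    have hzero : (p + q) ^ 2 = 0 := by linear_combination hpows + (q ^ 2 + p * q) * h2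
    have hadd : p + q = 0 := pow_eq_zero_iff (two_ne_zero) |>.mp hzero
    have hpq : p = q := by linear_combination hadd - q * h2
    obtain ⟨r, hra, hrb, hrc⟩ := IH d (by omega) a₁ b₁ (by omega) (by omega) hd0 hpq
    exact ⟨r + 1, by omega, by omega, by omega⟩
  · -- odd case
    have hder : derivative (1 + X ^ c : Polynomial (ZMod 2)) = X ^ (c - 1) := by
      rw [derivative_add, derivative_one, derivative_X_pow]
      have hcast : ((c : ℕ) : ZMod 2) = 1 := by
        rw [← ZMod.natCast_mod, Nat.odd_iff.mp hco, Nat.cast_one]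
      rw [hcast]
      simp
    have hsep : Separable (1 + X ^ c : Polynomial (ZMod 2)) := by
      refine ⟨1, X, ?_⟩
      rw [hder]
      have hx : (X : Polynomial (ZMod 2)) * X ^ (c - 1) = X ^ c := by
        rw [← pow_succ']
        congr 1
        omega
      rw [hx]
      linear_combination (X ^ c : Polynomial (ZMod 2)) * h2
    have hsqf : Squarefree (1 + X ^ c : Polynomial (ZMod 2)) := hsep.squarefree
    have ha1 : a = 1 := by
      by_contra h
      have h2a : 2 ≤ a := by omega
      have : IsUnit (X + 1 : Polynomial (ZMod 2)) := by
        apply hsqf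
        rw [← heq, ← sq]
        exact dvd_mul_of_dvd_left (pow_dvd_pow _ h2a) _
      have hdg := natDegree_eq_zero_of_isUnit this
      have hdeg1 : (X + 1 : Polynomial (ZMod 2)).natDegree = 1 := by compute_degree!
      omega
    have hb1 : b = 1 := by
      by_contra h
      have h2b : 2 ≤ b := by omega
      have : IsUnit (X ^ 2 + X + 1 : Polynomial (ZMod 2)) := by
        apply hsqf
        rw [← heq, ← sq]
        exact dvd_mul_of_dvd_right (pow_dvd_pow _ h2b) _
      have hd2 := natDegree_eq_zero_of_isUnit this
      have : (X ^ 2 + X + 1 : Polynomial (ZMod 2)).natDegree = 2 := by compute_degree!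
      omega
    rw [ha1, hb1, pow_one, pow_one] at heq
    have h3 : (1 : Polynomial (ZMod 2)) + X ^ 3 = 1 + X ^ c := by
      rw [← heq]
      linear_combination (-(X ^ 2 + X) : Polynomial (ZMod 2)) * h2
    have hX : (X ^ 3 : Polynomial (ZMod 2)) = X ^ c := by
      exact add_left_cancel h3
    have hc3 : c = 3 := by
      have := congrArg natDegree hX
      rw [natDegree_X_pow, natDegree_X_pow] at this
      omega
    exact ⟨0, by omega, by omega, by omega⟩

theorem xp1_pow_mul_m1_pow_eq_one_add_x_pow (a b c : ℕ)
    (ha : 0 < a) (hb : 0 < b) (hc : 0 < c) :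
    (((X + 1) ^ a * (X ^ 2 + X + 1) ^ b : Polynomial (ZMod 2)) = 1 + X ^ c) ↔
      ∃ r : ℕ, a = 2 ^ r ∧ b = 2 ^ r ∧ c = 3 * b := by
  constructor
  · exact fwd c a b ha hb hc
  · rintro ⟨r, rfl, hbr, hcb⟩
    subst hbr hcb
    rw [← mul_pow]
    have h2 := two_eq_zero_poly
    have hstep : ((X + 1) * (X ^ 2 + X + 1) : Polynomial (ZMod 2)) = 1 + X ^ 3 := by
      linear_combination (X ^ 2 + X : Polynomial (ZMod 2)) * h2
    rw [hstep, add_pow_char_pow, one_pow, ← pow_mul, mul_comm 3 (2 ^ r)]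
end

section
/- Let Q = 1 + x^a(x+1)^b(x^2+x+1)^c ∈ F_2[x] with a, b, c positive integers, a even and b odd, and suppose Q*(x) = x^{a+b+2c} Q(1/x) = 1 + x^d(x+1)^e for positive integers d, e. Then b = c = 1, d = 3, and a = e = 2^r for some positive integer r. -/
open Polynomial

lemma reflect_pow_self {R : Type*} [CommSemiring R] (p : R[X]) (k : ℕ)
    (hk : p.natDegree ≤ k) (hp : p.reflect k = p) (j : ℕ) :
    (p ^ j).reflect (j * k) = p ^ j := by
  induction j with
  | zero => simpa using reflect_C (1:R) 0
  | succ j ih =>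
      have hdeg : (p ^ j).natDegree ≤ j * k :=
        le_trans natDegree_pow_le (Nat.mul_le_mul_left j hk)
      calc (p ^ (j+1)).reflect ((j+1) * k) = (p * p ^ j).reflect (k + j * k) := by
            rw [pow_succ]; ring_nf
      _ = p.reflect k * (p ^ j).reflect (j * k) := reflect_mul p (p^j) hk hdeg
      _ = p ^ (j+1) := by rw [hp, ih, pow_succ]; ring

lemma refl1 : ((X + 1 : (ZMod 2)[X])).reflect 1 = X + 1 := by
  have h1 : (X : (ZMod 2)[X]) = X ^ 1 := (pow_one X).symm
  rw [reflect_add]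
  nth_rewrite 1 [h1]
  rw [reflect_monomial]
  have : ((1 : (ZMod 2)[X])).reflect 1 = X := by
    simpa using reflect_C (1 : ZMod 2) 1
  rw [this]
  simp [add_comm]

lemma refl2 : ((X ^ 2 + X + 1 : (ZMod 2)[X])).reflect 2 = X ^ 2 + X + 1 := by
  have h1 : (X : (ZMod 2)[X]) = X ^ 1 := (pow_one X).symm
  rw [reflect_add, reflect_add]
  nth_rewrite 2 [h1]
  rw [reflect_monomial, reflect_monomial]
  have : ((1 : (ZMod 2)[X])).reflect 2 = X ^ 2 := by
    simpa using reflect_C (1 : ZMod 2) 2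
  rw [this]
  norm_num [revAt_le]
  ring

lemma nd1 : (X + 1 : (ZMod 2)[X]).natDegree = 1 := by
  simpa using natDegree_X_add_C (1 : ZMod 2)

lemma nd2 : (X ^ 2 + X + 1 : (ZMod 2)[X]).natDegree = 2 := by compute_degree!

lemma main_reflect (a b c : ℕ) :
    ((1 : (ZMod 2)[X]) + X ^ a * (X + 1) ^ b * (X ^ 2 + X + 1) ^ c).reflect (a + b + 2 * c)
      = X ^ (a + b + 2 * c) + (X + 1) ^ b * (X ^ 2 + X + 1) ^ c := by
  have hb : ((X + 1 : (ZMod 2)[X]) ^ b).natDegree ≤ b := by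
    refine le_trans natDegree_pow_le ?_
    rw [nd1]; omega
  have hc : ((X ^ 2 + X + 1 : (ZMod 2)[X]) ^ c).natDegree ≤ 2 * c := by
    refine le_trans natDegree_pow_le ?_
    rw [nd2]; omega
  have hX : ((X : (ZMod 2)[X]) ^ a).natDegree ≤ a := natDegree_X_pow_le a
  have hbc : ((X + 1 : (ZMod 2)[X]) ^ b * (X ^ 2 + X + 1) ^ c).natDegree ≤ b + 2 * c :=
    le_trans (natDegree_mul_le) (by omega)
  rw [reflect_add]
  have h1 : ((1 : (ZMod 2)[X])).reflect (a + b + 2 * c) = X ^ (a + b + 2 * c) := by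
    simpa using reflect_C (1 : ZMod 2) (a + b + 2 * c)
  rw [h1]
  congr 1
  rw [mul_assoc, show a + b + 2 * c = a + (b + 2 * c) by ring,
    reflect_mul _ _ hX hbc, reflect_mul _ _ hb hc, reflect_monomial, revAt_le le_rfl]
  have hbr : ((X + 1 : (ZMod 2)[X]) ^ b).reflect b = (X + 1) ^ b := by
    simpa using reflect_pow_self (X + 1 : (ZMod 2)[X]) 1 nd1.le refl1 b
  have hcr : ((X ^ 2 + X + 1 : (ZMod 2)[X]) ^ c).reflect (2 * c) = (X ^ 2 + X + 1) ^ c := by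
    have := reflect_pow_self (X ^ 2 + X + 1 : (ZMod 2)[X]) 2 nd2.le refl2 c
    rwa [mul_comm c 2] at this
  rw [hbr, hcr]
  simp

lemma cast_odd {k : ℕ} (h : Odd k) : ((k : ℕ) : ZMod 2) = 1 := by
  have h1 : k % 2 = 1 := Nat.odd_iff.mp h
  rw [← ZMod.natCast_mod, h1]; norm_num

lemma cast_even {k : ℕ} (h : Even k) : ((k : ℕ) : ZMod 2) = 0 := by
  have h1 : k % 2 = 0 := Nat.even_iff.mp h
  rw [← ZMod.natCast_mod, h1]; norm_num

lemma M1 : (X + 1 : (ZMod 2)[X]).Monic := by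
  simpa using monic_X_add_C (1 : ZMod 2)

lemma M2 : (X ^ 2 + X + 1 : (ZMod 2)[X]).Monic := by
  have h : (X + 1 : (ZMod 2)[X]).degree < 2 := by
    rw [show (X + 1 : (ZMod 2)[X]) = X + C 1 by simp, degree_X_add_C]
    norm_num
  simpa [add_assoc] using monic_X_pow_add h

lemma ndT (b c : ℕ) :
    ((X + 1 : (ZMod 2)[X]) ^ b * (X ^ 2 + X + 1) ^ c).natDegree = b + 2 * c := by
  rw [natDegree_mul (M1.pow b).ne_zero (M2.pow c).ne_zero, natDegree_pow, natDegree_pow,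
    nd1, nd2]
  ring

theorem reciprocal_mersenne_even_odd (a b c d e : ℕ)
    (ha : 0 < a) (hb : 0 < b) (hc : 0 < c) (hd : 0 < d) (he : 0 < e)
    (hea : Even a) (hob : Odd b)
    (Q : Polynomial (ZMod 2))
    (hQ : Q = 1 + X ^ a * (X + 1) ^ b * (X ^ 2 + X + 1) ^ c)
    (hstar : Q.reflect (a + b + 2 * c) = 1 + X ^ d * (X + 1) ^ e) :
    b = 1 ∧ c = 1 ∧ d = 3 ∧ ∃ r : ℕ, 0 < r ∧ a = 2 ^ r ∧ e = 2 ^ r := by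
  have h2 : (2 : (ZMod 2)[X]) = 0 := by
    have := CharP.cast_eq_zero ((ZMod 2)[X]) 2
    exact_mod_cast this
  rw [hQ, main_reflect] at hstar
  -- hstar : X^(a+b+2c) + (X+1)^b (X²+X+1)^c = 1 + X^d (X+1)^e
  -- degrees give a+b+2c = d+e
  have hXe : ((X : (ZMod 2)[X]) ^ d * (X + 1) ^ e).natDegree = d + e := by
    rw [natDegree_mul (pow_ne_zero _ X_ne_zero) (M1.pow e).ne_zero,
      natDegree_X_pow, natDegree_pow, nd1]
    ring
  have hn : a + b + 2 * c = d + e := by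
    have hL : ((X : (ZMod 2)[X]) ^ (a + b + 2 * c)
        + (X + 1) ^ b * (X ^ 2 + X + 1) ^ c).natDegree = a + b + 2 * c := by
      rw [natDegree_add_eq_left_of_natDegree_lt, natDegree_X_pow]
      rw [ndT, natDegree_X_pow]; omega
    have hR : ((1 : (ZMod 2)[X]) + X ^ d * (X + 1) ^ e).natDegree = d + e := by
      rw [natDegree_add_eq_right_of_natDegree_lt, hXe]
      rw [hXe, natDegree_one]; omega
    rw [← hL, hstar, hR]
  obtain ⟨r, m, hm2, hme⟩ := Nat.exists_eq_pow_mul_and_not_dvd he.ne' 2 (by norm_num)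
  have hmodd : Odd m := Nat.odd_iff.mpr (Nat.two_dvd_ne_zero.mp hm2)
  have hm0 : m ≠ 0 := by rintro rfl; exact hm2 ⟨0, rfl⟩
  -- Frobenius
  have hH : (X : (ZMod 2)[X]) ^ e + (X + 1) ^ e = (X ^ m + (X + 1) ^ m) ^ 2 ^ r := by
    rw [add_pow_char_pow, ← pow_mul, ← pow_mul, mul_comm m (2 ^ r), ← hme]
  have hkey : (X : (ZMod 2)[X]) ^ d * (X ^ m + (X + 1) ^ m) ^ 2 ^ r
      = 1 + (X + 1) ^ b * (X ^ 2 + X + 1) ^ c := by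
    rw [← hH]
    rw [hn] at hstar
    linear_combination hstar + (X ^ d * (X + 1) ^ e
      - (X + 1 : (ZMod 2)[X]) ^ b * (X ^ 2 + X + 1) ^ c) * h2
  -- degree of G = X^m + (X+1)^m
  have hGc : (X ^ m + (X + 1) ^ m : (ZMod 2)[X]).coeff (m - 1) = 1 := by
    rw [coeff_add, coeff_X_pow, if_neg (by omega), coeff_X_add_one_pow,
      Nat.choose_symm (show 1 ≤ m by omega), Nat.choose_one_right]
    rw [zero_add]
    exact cast_odd hmodd
  have hGne : (X ^ m + (X + 1) ^ m : (ZMod 2)[X]) ≠ 0 := fun h => by simp [h] at hGc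
  have hGdeg : (X ^ m + (X + 1) ^ m : (ZMod 2)[X]).natDegree = m - 1 := by
    apply le_antisymm
    · rw [natDegree_le_iff_coeff_eq_zero]
      intro N hN
      rw [coeff_add, coeff_X_pow, coeff_X_add_one_pow]
      rcases eq_or_lt_of_le (show m ≤ N by omega) with h | h
      · rw [if_pos h.symm, ← h, Nat.choose_self]
        norm_num
        exact CharP.cast_eq_zero (ZMod 2) 2
      · rw [if_neg (by omega), Nat.choose_eq_zero_of_lt h]
        simp
    · exact le_natDegree_of_ne_zero (by rw [hGc]; exact one_ne_zero)
  -- degree comparison in hkey gives a = 2^r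
  have hdeg2 : d + 2 ^ r * (m - 1) = b + 2 * c := by
    have hdl : ((X : (ZMod 2)[X]) ^ d * (X ^ m + (X + 1) ^ m) ^ 2 ^ r).natDegree
        = d + 2 ^ r * (m - 1) := by
      rw [natDegree_mul (pow_ne_zero _ X_ne_zero) (pow_ne_zero _ hGne),
        natDegree_X_pow, natDegree_pow, hGdeg]
    have hdr : ((1 : (ZMod 2)[X]) + (X + 1) ^ b * (X ^ 2 + X + 1) ^ c).natDegree
        = b + 2 * c := by
      rw [natDegree_add_eq_right_of_natDegree_lt, ndT]
      rw [ndT, natDegree_one]; omega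
    rw [← hdl, hkey, hdr]
  have har : a = 2 ^ r := by
    obtain ⟨k, rfl⟩ : ∃ k, m = k + 1 := ⟨m - 1, by omega⟩
    rw [hme] at hn
    have h1 : 2 ^ r * (k + 1) = 2 ^ r * k + 2 ^ r := by ring
    have h3 : (k + 1) - 1 = k := by omega
    rw [h1] at hn
    rw [h3] at hdeg2
    linarith
  have hr : 0 < r := by
    rcases Nat.eq_zero_or_pos r with h | h
    · rw [h, pow_zero] at har
      rw [har] at hea
      norm_num at hea
    · exact h
  have heeven : Even e := by
    rw [hme]
    exact (Even.mul_right (Nat.even_pow.mpr ⟨even_two, hr.ne'⟩) m)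
  have hdodd : Odd d := by
    have h1 := Nat.even_iff.mp hea
    have h2' := Nat.odd_iff.mp hob
    have h3 := Nat.even_iff.mp heeven
    rw [Nat.odd_iff]; omega
  -- derivative computation
  have hdL : derivative ((X : (ZMod 2)[X]) ^ d * (X ^ m + (X + 1) ^ m) ^ 2 ^ r)
      = X ^ (d - 1) * (X ^ m + (X + 1) ^ m) ^ 2 ^ r := by
    rw [derivative_mul, derivative_X_pow, derivative_pow]
    rw [cast_odd hdodd, cast_even (Nat.even_pow.mpr ⟨even_two, hr.ne'⟩)]
    simp
  have hP2d : derivative (X ^ 2 + X + 1 : (ZMod 2)[X]) = 1 := by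
    rw [derivative_add, derivative_add, derivative_X_pow, derivative_X, derivative_one]
    rw [show ((2 : ℕ) : ZMod 2) = 0 from CharP.cast_eq_zero (ZMod 2) 2]
    simp
  have hdR : derivative ((1 : (ZMod 2)[X]) + (X + 1) ^ b * (X ^ 2 + X + 1) ^ c)
      = (X + 1) ^ (b - 1) * (X ^ 2 + X + 1) ^ c
        + C ((c : ℕ) : ZMod 2) * ((X + 1) ^ b * (X ^ 2 + X + 1) ^ (c - 1)) := by
    rw [derivative_add, derivative_one, derivative_mul, derivative_pow, derivative_pow,
      hP2d]
    rw [show derivative (X + 1 : (ZMod 2)[X]) = 1 by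
      rw [derivative_add, derivative_X, derivative_one]; ring]
    rw [cast_odd hob, C_1]
    ring
  have hderiv : (X : (ZMod 2)[X]) ^ (d - 1) * (X ^ m + (X + 1) ^ m) ^ 2 ^ r
      = (X + 1) ^ (b - 1) * (X ^ 2 + X + 1) ^ c
        + C ((c : ℕ) : ZMod 2) * ((X + 1) ^ b * (X ^ 2 + X + 1) ^ (c - 1)) := by
    rw [← hdL, ← hdR, hkey]
  have hb' : (X + 1 : (ZMod 2)[X]) ^ b = (X + 1) * (X + 1) ^ (b - 1) := by
    rw [← pow_succ']; congr 1; omega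
  have hc' : (X ^ 2 + X + 1 : (ZMod 2)[X]) ^ c = (X ^ 2 + X + 1) * (X ^ 2 + X + 1) ^ (c - 1) := by
    rw [← pow_succ']; congr 1; omega
  -- eval-at-zero helper values
  have evG : ((X ^ m + (X + 1) ^ m : (ZMod 2)[X]) ^ 2 ^ r).eval 0 = 1 := by
    simp [zero_pow hm0]
  rcases Nat.even_or_odd c with hceven | hcodd
  · -- c even: contradiction
    exfalso
    rw [cast_even hceven] at hderiv
    rw [map_zero, zero_mul, add_zero] at hderiv
    have hev := congrArg (eval 0) hderiv
    simp only [eval_mul, eval_pow, eval_add, eval_X, eval_one, eval_ofNat] at hev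
    rw [zero_pow hm0] at hev
    norm_num at hev
    -- hev : 0 ^ (d-1) * ... = 1  ⇒ d = 1
    have hd1 : d = 1 := by
      by_contra hne
      omega
    rw [hd1] at hderiv hkey
    simp only [Nat.sub_self, pow_zero, one_mul] at hderiv
    rw [pow_one, hderiv] at hkey
    -- hkey : X * ((X+1)^(b-1) * P₂^c) = 1 + (X+1)^b * P₂^c
    rw [hb'] at hkey
    have hone : (1 : (ZMod 2)[X]) = (X + 1) ^ (b - 1) * (X ^ 2 + X + 1) ^ c := by
      linear_combination -hkey - ((X + 1 : (ZMod 2)[X]) ^ (b - 1) * (X ^ 2 + X + 1) ^ c) * h2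
    have := congrArg natDegree hone
    rw [natDegree_one, natDegree_mul (M1.pow (b-1)).ne_zero (M2.pow c).ne_zero,
      natDegree_pow, natDegree_pow, nd1, nd2] at this
    omega
  · -- c odd
    rw [cast_odd hcodd, map_one, one_mul] at hderiv
    have hderiv2 : (X : (ZMod 2)[X]) ^ (d - 1) * (X ^ m + (X + 1) ^ m) ^ 2 ^ r
        = X ^ 2 * ((X + 1) ^ (b - 1) * (X ^ 2 + X + 1) ^ (c - 1)) := by
      rw [hderiv, hb', hc']
      linear_combination ((X + 1 : (ZMod 2)[X]) ^ (b - 1) * (X ^ 2 + X + 1) ^ (c - 1)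
        * (X + 1)) * h2
    -- eval at 0 shows d ≥ 2
    have hev := congrArg (eval 0) hderiv2
    simp only [eval_mul, eval_pow, eval_add, eval_X, eval_one, eval_one] at hev
    rw [zero_pow hm0] at hev
    norm_num at hev
    have hd3 : d = 3 := by
      have hdge : 2 ≤ d := by
        omega
      have hdge3 : 3 ≤ d := by
        rcases Nat.odd_iff.mp hdodd with h
        omega
      -- cancel X^2
      have hx : (X : (ZMod 2)[X]) ^ (d - 1) = X ^ 2 * X ^ (d - 3) := by
        rw [← pow_add]; congr 1; omega
      rw [hx, mul_assoc] at hderiv2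
      have hcan := mul_left_cancel₀ (pow_ne_zero 2 (X_ne_zero (R := ZMod 2))) hderiv2
      have hev2 := congrArg (eval 0) hcan
      simp only [eval_mul, eval_pow, eval_add, eval_X, eval_one] at hev2
      rw [zero_pow hm0] at hev2
      norm_num at hev2
      by_contra hne
      omega
    -- now cancel to get G^(2^r) = (X+1)^(b-1) * P₂^(c-1)
    have hx : (X : (ZMod 2)[X]) ^ (d - 1) = X ^ 2 := by rw [hd3]
    rw [hx] at hderiv2
    have hG : (X ^ m + (X + 1 : (ZMod 2)[X]) ^ m) ^ 2 ^ r
        = (X + 1) ^ (b - 1) * (X ^ 2 + X + 1) ^ (c - 1) :=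
      mul_left_cancel₀ (pow_ne_zero 2 (X_ne_zero (R := ZMod 2))) hderiv2
    rw [hd3, hG] at hkey
    rw [hb', hc'] at hkey
    have hone : (X + 1 : (ZMod 2)[X]) ^ (b - 1) * (X ^ 2 + X + 1) ^ (c - 1) = 1 := by
      linear_combination -hkey - (1 + (X + 1 : (ZMod 2)[X]) ^ (b - 1)
        * (X ^ 2 + X + 1) ^ (c - 1) * (X ^ 2 + X)) * h2
    have hdeg0 := congrArg natDegree hone
    rw [natDegree_one, natDegree_mul (M1.pow (b-1)).ne_zero (M2.pow (c-1)).ne_zero,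
      natDegree_pow, natDegree_pow, nd1, nd2] at hdeg0
    have hb1 : b = 1 := by omega
    have hc1 : c = 1 := by omega
    -- G^(2^r) = 1 gives m = 1
    rw [hb1, hc1] at hG
    norm_num at hG
    have hm1 : m = 1 := by
      have := congrArg natDegree hG
      rw [natDegree_pow, hGdeg, natDegree_one] at this
      have h2r : 2 ^ r ≠ 0 := (pow_pos (by norm_num : (0:ℕ) < 2) r).ne'
      have : m - 1 = 0 := by
        rcases Nat.mul_eq_zero.mp this with h | h
        · exact absurd h h2r
        · exact h
      omega
    refine ⟨hb1, hc1, hd3, r, hr, har, ?_⟩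
    rw [hme, hm1, mul_one]
end
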